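/- Let f:[0,∞)→ℝ be superquadratic, concave, and monotone decreasing, let α ∈ [0,1], and let A, B be n×n positive semi-definite complex matrices. Then for each k = 1,…,n, λ_k↓(f((1−α)A + αB)) ≤ λ_k↓(S), where S = (1−α)(f(A) − f(λ₁(A)−λ_n(A))I − f(α|A−B|)) + α(f(B) − f(λ₁(B)−λ_n(B))I − f((1−α)|A−B|)). -/

import Mathlib

open Matrix
open scoped ComplexOrder

/-- A function `f : [0,∞) → ℝ` is superquadratic if for every `t ≥ 0` there is a constant
`C` with `f s ≥ f t + C * (s - t) + f |s - t|` for all `s ≥ 0`. -/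
def Superquadratic (f : ℝ → ℝ) : Prop :=
  ∀ t : ℝ, 0 ≤ t → ∃ C : ℝ, ∀ s : ℝ, 0 ≤ s → f t + C * (s - t) + f |s - t| ≤ f s

/-- Apply a real function to a matrix via the functional calculus (junk value `0` if the
matrix is not Hermitian). -/
noncomputable def mfun {n : ℕ} (f : ℝ → ℝ) (A : Matrix (Fin n) (Fin n) ℂ) :
    Matrix (Fin n) (Fin n) ℂ :=
  if h : A.IsHermitian then h.cfc f else 0

/-- `|A| = √(Aᴴ A)`. -/
noncomputable def matAbs {n : ℕ} (A : Matrix (Fin n) (Fin n) ℂ) : Matrix (Fin n) (Fin n) ℂ :=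
  (((Matrix.posSemidef_conjTranspose_mul_self A).1.eigenvectorUnitary : Matrix (Fin n) (Fin n) ℂ) *
    diagonal ((↑) ∘ Real.sqrt ∘ (Matrix.posSemidef_conjTranspose_mul_self A).1.eigenvalues) *
    (star (Matrix.posSemidef_conjTranspose_mul_self A).1.eigenvectorUnitary : Matrix (Fin n) (Fin n) ℂ))

/-- Largest eigenvalue of a Hermitian matrix (junk value `0` otherwise). -/
noncomputable def lmax {n : ℕ} (A : Matrix (Fin n) (Fin n) ℂ) : ℝ :=
  if h : A.IsHermitian then ⨆ i, h.eigenvalues i else 0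

/-- Smallest eigenvalue of a Hermitian matrix (junk value `0` otherwise). -/
noncomputable def lmin {n : ℕ} (A : Matrix (Fin n) (Fin n) ℂ) : ℝ :=
  if h : A.IsHermitian then ⨅ i, h.eigenvalues i else 0

/-- `k`-th largest eigenvalue (`k = 0` gives the largest) of a Hermitian matrix
(junk value `0` otherwise). -/
noncomputable def lkth {n : ℕ} (A : Matrix (Fin n) (Fin n) ℂ) (k : Fin n) : ℝ :=
  if h : A.IsHermitian then (h.eigenvalues ∘ Tuple.sort h.eigenvalues) k.rev else 0

/-- The quadratic form `⟨Ax, x⟩` as a complex number. -/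
noncomputable def qf {n : ℕ} (A : Matrix (Fin n) (Fin n) ℂ) (x : Fin n → ℂ) : ℂ :=
  star x ⬝ᵥ A *ᵥ x

/-- Löwner order: `A ⊑ B` iff `B - A` is positive semidefinite. -/
def Loewner {n : ℕ} (A B : Matrix (Fin n) (Fin n) ℂ) : Prop :=
  (B - A).PosSemidef


section Aux

variable {n : ℕ}

lemma star_dot_self (y : Fin n → ℂ) :
    star y ⬝ᵥ y = ((∑ i, Complex.normSq (y i) : ℝ) : ℂ) := by
  simp [dotProduct, Complex.normSq_eq_conj_mul_self, Pi.star_apply]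

lemma qf_repr (U : Matrix (Fin n) (Fin n) ℂ) (hU : U ∈ Matrix.unitaryGroup (Fin n) ℂ)
    (g : Fin n → ℝ) (y : Fin n → ℂ) :
    star (U *ᵥ y) ⬝ᵥ (U * diagonal (RCLike.ofReal ∘ g) * star U) *ᵥ (U *ᵥ y) =
      ((∑ i, g i * Complex.normSq (y i) : ℝ) : ℂ) := by
  have h1 : star U * U = 1 := Matrix.mem_unitaryGroup_iff'.mp hU
  rw [star_mulVec, ← mulVec_mulVec, ← mulVec_mulVec, mulVec_mulVec (M := star U), h1, one_mulVec]
  rw [dotProduct_mulVec (star y ᵥ* Uᴴ), ← star_eq_conjTranspose, vecMul_vecMul, h1, vecMul_one]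
  push_cast
  simp [dotProduct, mulVec_diagonal, Complex.normSq_eq_conj_mul_self, Pi.star_apply]
  congr 1; ext i; ring

lemma norm_repr (U : Matrix (Fin n) (Fin n) ℂ) (hU : U ∈ Matrix.unitaryGroup (Fin n) ℂ)
    (y : Fin n → ℂ) :
    star (U *ᵥ y) ⬝ᵥ (U *ᵥ y) = ((∑ i, Complex.normSq (y i) : ℝ) : ℂ) := by
  have h1 : star U * U = 1 := Matrix.mem_unitaryGroup_iff'.mp hU
  rw [star_mulVec, dotProduct_mulVec, ← star_eq_conjTranspose, vecMul_vecMul, h1, vecMul_one,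
    star_dot_self]

/-- extension by zero as a linear map -/
noncomputable def extLM (I : Finset (Fin n)) : (↥I → ℂ) →ₗ[ℂ] (Fin n → ℂ) where
  toFun y := fun i => if h : i ∈ I then y ⟨i, h⟩ else 0
  map_add' y z := by ext i; by_cases h : i ∈ I <;> simp [h]
  map_smul' c y := by ext i; by_cases h : i ∈ I <;> simp [h]

lemma exists_test (R : Matrix (Fin n) (Fin n) ℂ) (I J : Finset (Fin n))
    (h : n < I.card + J.card) :
    ∃ y : Fin n → ℂ, (∑ i, Complex.normSq (y i)) = 1 ∧ (∀ i ∉ I, y i = 0) ∧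
      (∀ j ∉ J, (R *ᵥ y) j = 0) := by
  classical
  let T : (↥I → ℂ) →ₗ[ℂ] (↥(Jᶜ) → ℂ) :=
    (LinearMap.funLeft ℂ ℂ (Subtype.val)) ∘ₗ (Matrix.mulVecLin R) ∘ₗ extLM I
  have hd : Module.finrank ℂ (↥(Jᶜ) → ℂ) < Module.finrank ℂ (↥I → ℂ) := by
    simp only [Module.finrank_pi, Fintype.card_coe]
    rw [Finset.card_compl, Fintype.card_fin]
    have := Finset.card_le_univ J
    simp only [Fintype.card_fin] at this
    omega
  have hker : ¬ Function.Injective T := fun hinj =>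
    absurd (LinearMap.finrank_le_finrank_of_injective hinj) (not_le.mpr hd)
  rw [← LinearMap.ker_eq_bot] at hker
  obtain ⟨y₀, hy₀mem, hy₀ne⟩ := (LinearMap.ker T).ne_bot_iff.mp hker
  set v : Fin n → ℂ := extLM I y₀ with hv
  have hvI : ∀ i ∉ I, v i = 0 := by
    intro i hi
    simp only [hv, extLM, LinearMap.coe_mk, AddHom.coe_mk]
    exact dif_neg hi
  have hvJ : ∀ j ∉ J, (R *ᵥ v) j = 0 := by
    intro j hj
    have := congrFun (LinearMap.mem_ker.mp hy₀mem) ⟨j, Finset.mem_compl.mpr hj⟩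
    simpa [T, hv] using this
  have hvne : v ≠ 0 := by
    intro h0
    apply hy₀ne
    ext i
    have := congrFun h0 i.1
    simpa [hv, extLM, i.2] using this
  set s : ℝ := ∑ i, Complex.normSq (v i) with hs
  have hspos : 0 < s := by
    rcases Function.ne_iff.mp hvne with ⟨i, hi⟩
    refine Finset.sum_pos' (fun i _ => Complex.normSq_nonneg _) ⟨i, Finset.mem_univ i, ?_⟩
    simpa using hi
  set c : ℝ := (Real.sqrt s)⁻¹ with hc
  refine ⟨(c : ℂ) • v, ?_, ?_, ?_⟩
  · have : ∀ i, Complex.normSq (((c:ℂ) • v) i) = c^2 * Complex.normSq (v i) := by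
      intro i
      rw [Pi.smul_apply, smul_eq_mul, Complex.normSq_mul, Complex.normSq_ofReal, ← sq]
    rw [Finset.sum_congr rfl (fun i _ => this i), ← Finset.mul_sum, ← hs, hc]
    rw [← Real.sqrt_inv]
    rw [Real.sq_sqrt (by positivity)]
    field_simp
  · intro i hi
    rw [Pi.smul_apply, hvI i hi, smul_zero]
  · intro j hj
    rw [mulVec_smul]
    simp [hvJ j hj]

lemma wsum_le (g w : Fin n → ℝ) (hw : ∀ i, 0 ≤ w i) (hsum : ∑ i, w i = 1)
    (J : Finset (Fin n)) (hsupp : ∀ i ∉ J, w i = 0) (c : ℝ) (hg : ∀ j ∈ J, g j ≤ c) :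
    ∑ i, g i * w i ≤ c := by
  have h1 : ∑ i, g i * w i = ∑ i ∈ J, g i * w i :=
    (Finset.sum_subset J.subset_univ (fun i _ hi => by rw [hsupp i hi, mul_zero])).symm
  have h4 : ∑ i ∈ J, w i = 1 := by
    rw [← hsum]
    exact Finset.sum_subset J.subset_univ (fun i _ hi => hsupp i hi)
  calc ∑ i, g i * w i = ∑ i ∈ J, g i * w i := h1
    _ ≤ ∑ i ∈ J, c * w i :=
        Finset.sum_le_sum (fun i hi => mul_le_mul_of_nonneg_right (hg i hi) (hw i))
    _ = c * ∑ i ∈ J, w i := by rw [Finset.mul_sum]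
    _ = c := by rw [h4, mul_one]

lemma wsum_ge (g w : Fin n → ℝ) (hw : ∀ i, 0 ≤ w i) (hsum : ∑ i, w i = 1)
    (J : Finset (Fin n)) (hsupp : ∀ i ∉ J, w i = 0) (c : ℝ) (hg : ∀ j ∈ J, c ≤ g j) :
    c ≤ ∑ i, g i * w i := by
  have := wsum_le (fun i => -g i) w hw hsum J hsupp (-c) (fun j hj => neg_le_neg (hg j hj))
  simp only [neg_mul, Finset.sum_neg_distrib, neg_le_neg_iff] at this
  linarith [this]

lemma qf_repr' (U W : Matrix (Fin n) (Fin n) ℂ) (hU : U ∈ Matrix.unitaryGroup (Fin n) ℂ)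
    (hW : W ∈ Matrix.unitaryGroup (Fin n) ℂ) (y : Fin n → ℂ)
    (hy : (∑ i, Complex.normSq (y i)) = 1) :
    ∃ w : Fin n → ℝ, (∀ i, 0 ≤ w i) ∧ (∑ i, w i) = 1 ∧
      (∀ g : Fin n → ℝ,
        (star (U *ᵥ y) ⬝ᵥ (W * diagonal (RCLike.ofReal ∘ g) * star W) *ᵥ (U *ᵥ y)).re =
          ∑ i, g i * w i) ∧
      (∀ j, w j = Complex.normSq (((star W * U) *ᵥ y) j)) := by
  have hxz : U *ᵥ y = W *ᵥ ((star W * U) *ᵥ y) := by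
    rw [mulVec_mulVec, ← mul_assoc, Matrix.mem_unitaryGroup_iff.mp hW, one_mul]
  refine ⟨fun j => Complex.normSq (((star W * U) *ᵥ y) j), fun i => Complex.normSq_nonneg _,
    ?_, fun g => ?_, fun j => rfl⟩
  · have h1 : ((∑ i, Complex.normSq ((((star W * U) *ᵥ y)) i) : ℝ) : ℂ) = 1 := by
      rw [← norm_repr W hW ((star W * U) *ᵥ y), ← hxz, norm_repr U hU y, hy]
      norm_num
    exact_mod_cast h1
  · rw [hxz, qf_repr W hW g ((star W * U) *ᵥ y)]
    simp

lemma lkth_eq (M : Matrix (Fin n) (Fin n) ℂ) (hM : M.IsHermitian) (k : Fin n) :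
    lkth M k = hM.eigenvalues (Tuple.sort hM.eigenvalues k.rev) := by
  rw [lkth, dif_pos hM]; rfl

lemma lkth_ge (M : Matrix (Fin n) (Fin n) ℂ) (hM : M.IsHermitian) (k : Fin n)
    (U : Matrix (Fin n) (Fin n) ℂ) (hU : U ∈ Matrix.unitaryGroup (Fin n) ℂ)
    (I : Finset (Fin n)) (hI : (k : ℕ) + 1 ≤ I.card) (c : ℝ)
    (h : ∀ y : Fin n → ℂ, (∑ i, Complex.normSq (y i)) = 1 → (∀ i ∉ I, y i = 0) →
      c ≤ (star (U *ᵥ y) ⬝ᵥ M *ᵥ (U *ᵥ y)).re) :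
    c ≤ lkth M k := by
  classical
  set σ := Tuple.sort hM.eigenvalues with hσ
  set J := (Finset.Iic k.rev).image ⇑σ with hJdef
  have hcard : J.card = (k.rev : ℕ) + 1 := by
    rw [hJdef, Finset.card_image_of_injective _ σ.injective, Fin.card_Iic]
  have hn : n < I.card + J.card := by
    have h1 := k.isLt
    have h2 : (k.rev : ℕ) = n - ((k : ℕ) + 1) := Fin.val_rev k
    omega
  obtain ⟨y, hy1, hyI, hyJ⟩ :=
    exists_test (star (hM.eigenvectorUnitary : Matrix (Fin n) (Fin n) ℂ) * U) I J hn
  have hq := h y hy1 hyI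
  obtain ⟨w, hw0, hw1, hwq, hwz⟩ :=
    qf_repr' U (hM.eigenvectorUnitary : Matrix (Fin n) (Fin n) ℂ) hU hM.eigenvectorUnitary.2
      y hy1
  rw [hM.spectral_theorem, Unitary.conjStarAlgAut_apply, hwq hM.eigenvalues] at hq
  have hsupp : ∀ i ∉ J, w i = 0 := by
    intro i hi
    rw [hwz i, hyJ i hi, Complex.normSq_zero]
  have hg : ∀ j ∈ J, hM.eigenvalues j ≤ lkth M k := by
    intro j hj
    rw [hJdef] at hj
    obtain ⟨i, hi, rfl⟩ := Finset.mem_image.mp hj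
    rw [lkth_eq M hM k]
    exact Tuple.monotone_sort hM.eigenvalues (Finset.mem_Iic.mp hi)
  exact le_trans hq (wsum_le hM.eigenvalues w hw0 hw1 J hsupp _ hg)

lemma lkth_le (M : Matrix (Fin n) (Fin n) ℂ) (hM : M.IsHermitian) (k : Fin n)
    (U : Matrix (Fin n) (Fin n) ℂ) (hU : U ∈ Matrix.unitaryGroup (Fin n) ℂ)
    (J : Finset (Fin n)) (hJ : n ≤ (k : ℕ) + J.card) (c : ℝ)
    (h : ∀ y : Fin n → ℂ, (∑ i, Complex.normSq (y i)) = 1 → (∀ i ∉ J, y i = 0) →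
      (star (U *ᵥ y) ⬝ᵥ M *ᵥ (U *ᵥ y)).re ≤ c) :
    lkth M k ≤ c := by
  classical
  set σ := Tuple.sort hM.eigenvalues with hσ
  set I := (Finset.Ici k.rev).image ⇑σ with hIdef
  have hcard : I.card = n - (k.rev : ℕ) := by
    rw [hIdef, Finset.card_image_of_injective _ σ.injective, Fin.card_Ici]
  have hn : n < I.card + J.card := by
    have h1 := k.isLt
    have h2 : (k.rev : ℕ) = n - ((k : ℕ) + 1) := Fin.val_rev k
    omega
  obtain ⟨y, hy1, hyJ, hyI⟩ :=
    exists_test (star (hM.eigenvectorUnitary : Matrix (Fin n) (Fin n) ℂ) * U) J I (by omega)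
  have hq := h y hy1 hyJ
  obtain ⟨w, hw0, hw1, hwq, hwz⟩ :=
    qf_repr' U (hM.eigenvectorUnitary : Matrix (Fin n) (Fin n) ℂ) hU hM.eigenvectorUnitary.2
      y hy1
  rw [hM.spectral_theorem, Unitary.conjStarAlgAut_apply, hwq hM.eigenvalues] at hq
  have hsupp : ∀ i ∉ I, w i = 0 := by
    intro i hi
    rw [hwz i, hyI i hi, Complex.normSq_zero]
  have hg : ∀ j ∈ I, lkth M k ≤ hM.eigenvalues j := by
    intro j hj
    rw [hIdef] at hj
    obtain ⟨i, hi, rfl⟩ := Finset.mem_image.mp hj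
    rw [lkth_eq M hM k]
    exact Tuple.monotone_sort hM.eigenvalues (Finset.mem_Ici.mp hi)
  exact le_trans (wsum_ge hM.eigenvalues w hw0 hw1 I hsupp _ hg) hq

lemma cfc_form {A : Matrix (Fin n) (Fin n) ℂ} (hA : A.IsHermitian) (f : ℝ → ℝ) :
    hA.cfc f = (hA.eigenvectorUnitary : Matrix (Fin n) (Fin n) ℂ) *
      diagonal (RCLike.ofReal ∘ (fun i => f (hA.eigenvalues i))) *
      star (hA.eigenvectorUnitary : Matrix (Fin n) (Fin n) ℂ) := rfl

lemma mfun_eq {A : Matrix (Fin n) (Fin n) ℂ} (hA : A.IsHermitian) (f : ℝ → ℝ) :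
    mfun f A = hA.cfc f := dif_pos hA

lemma isHermitian_real_smul {M : Matrix (Fin n) (Fin n) ℂ} (hM : M.IsHermitian) (r : ℝ) :
    ((r : ℂ) • M).IsHermitian := by
  unfold Matrix.IsHermitian
  rw [conjTranspose_smul, hM.eq]
  norm_num

lemma cfc_isHermitian {A : Matrix (Fin n) (Fin n) ℂ} (hA : A.IsHermitian) (f : ℝ → ℝ) :
    (hA.cfc f).IsHermitian := by
  rw [cfc_form, star_eq_conjTranspose]
  apply Matrix.isHermitian_mul_mul_conjTranspose
  refine Matrix.isHermitian_diagonal_of_self_adjoint _ ?_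
  ext i
  simp [Pi.star_def, Complex.conj_ofReal]

lemma mfun_isHermitian (f : ℝ → ℝ) (A : Matrix (Fin n) (Fin n) ℂ) :
    (mfun f A).IsHermitian := by
  by_cases h : A.IsHermitian
  · rw [mfun_eq h]; exact cfc_isHermitian h f
  · rw [mfun, dif_neg h]; exact isHermitian_zero

lemma cfc_mul_cfc {A : Matrix (Fin n) (Fin n) ℂ} (hA : A.IsHermitian) (f g : ℝ → ℝ) :
    hA.cfc f * hA.cfc g = hA.cfc (fun x => f x * g x) := by
  have h1 : star (hA.eigenvectorUnitary : Matrix (Fin n) (Fin n) ℂ) *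
      (hA.eigenvectorUnitary : Matrix (Fin n) (Fin n) ℂ) = 1 :=
    Matrix.mem_unitaryGroup_iff'.mp hA.eigenvectorUnitary.2
  rw [cfc_form, cfc_form, cfc_form]
  rw [show ∀ (U D₁ D₂ V : Matrix (Fin n) (Fin n) ℂ), (U*D₁*V)*(U*D₂*V) = U*(D₁*(V*U)*D₂)*V by
    intros; noncomm_ring]
  rw [h1, mul_one, diagonal_mul_diagonal]
  congr 1
  congr 1
  ext i j
  by_cases h : i = j <;> simp [diagonal_apply, h, Complex.ofReal_mul]

lemma cfc_posSemidef {A : Matrix (Fin n) (Fin n) ℂ} (hA : A.IsHermitian) (f : ℝ → ℝ)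
    (hf : ∀ i, 0 ≤ f (hA.eigenvalues i)) : (hA.cfc f).PosSemidef := by
  rw [cfc_form, star_eq_conjTranspose]
  apply Matrix.PosSemidef.mul_mul_conjTranspose_same
  refine Matrix.posSemidef_diagonal_iff.mpr fun i => ?_
  simpa using (hf i)

open scoped MatrixOrder in
lemma matAbs_eq {T : Matrix (Fin n) (Fin n) ℂ} (hT : T.IsHermitian) :
    matAbs T = hT.cfc (fun x => |x|) := by
  have hpsd : (hT.cfc fun x => |x|).PosSemidef :=
    cfc_posSemidef hT _ (fun i => abs_nonneg _)
  have hsq : (hT.cfc fun x => |x|) ^ 2 = Tᴴ * T := by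
    rw [pow_two, cfc_mul_cfc, hT.eq]
    have habs : (fun x => |x| * |x|) = fun x : ℝ => x * x := funext fun x => abs_mul_abs_self x
    rw [habs, ← cfc_mul_cfc]
    have hid : hT.cfc (fun x => x) = T := by
      rw [cfc_form]
      exact hT.spectral_theorem.symm
    rw [hid]
  have hP := (Matrix.posSemidef_conjTranspose_mul_self T)
  have e1 : matAbs T = cfcₙ Real.sqrt (Tᴴ * T) := by
    rw [cfcₙ_eq_cfc, hP.1.cfc_eq, Matrix.IsHermitian.cfc, Unitary.conjStarAlgAut_apply]; rfl
  rw [e1, ← CFC.sqrt_eq_real_sqrt _ (Matrix.nonneg_iff_posSemidef.mpr hP)]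
  exact CFC.sqrt_unique (by rw [← pow_two]; exact hsq) (Matrix.nonneg_iff_posSemidef.mpr hpsd)

lemma lmax_eq {A : Matrix (Fin n) (Fin n) ℂ} (hA : A.IsHermitian) :
    lmax A = ⨆ i, hA.eigenvalues i := dif_pos hA

lemma lmin_eq {A : Matrix (Fin n) (Fin n) ℂ} (hA : A.IsHermitian) :
    lmin A = ⨅ i, hA.eigenvalues i := dif_pos hA

lemma le_lmax {A : Matrix (Fin n) (Fin n) ℂ} (hA : A.IsHermitian) (i : Fin n) :
    hA.eigenvalues i ≤ lmax A := by
  rw [lmax_eq hA]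
  exact le_ciSup (Set.Finite.bddAbove (Set.finite_range _)) i

lemma lmin_le {A : Matrix (Fin n) (Fin n) ℂ} (hA : A.IsHermitian) (i : Fin n) :
    lmin A ≤ hA.eigenvalues i := by
  rw [lmin_eq hA]
  exact ciInf_le (Set.Finite.bddBelow (Set.finite_range _)) i

/-- Superquadratic lower bound for the quadratic form of `mfun f A`. -/
lemma qf_superquad (f : ℝ → ℝ) (hf : Superquadratic f) (hdec : AntitoneOn f (Set.Ici (0 : ℝ)))
    {A : Matrix (Fin n) (Fin n) ℂ} (hA : A.PosSemidef)
    (U : Matrix (Fin n) (Fin n) ℂ) (hU : U ∈ Matrix.unitaryGroup (Fin n) ℂ)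
    (y : Fin n → ℂ) (hy : (∑ i, Complex.normSq (y i)) = 1) :
    f ((star (U *ᵥ y) ⬝ᵥ A *ᵥ (U *ᵥ y)).re) + f (lmax A - lmin A) ≤
      (star (U *ᵥ y) ⬝ᵥ (mfun f A) *ᵥ (U *ᵥ y)).re := by
  obtain ⟨w, hw0, hw1, hwq, -⟩ :=
    qf_repr' U (hA.1.eigenvectorUnitary : Matrix (Fin n) (Fin n) ℂ) hU hA.1.eigenvectorUnitary.2
      y hy
  set lam := hA.1.eigenvalues with hlam
  have hne : Nonempty (Fin n) := by
    rcases Nat.eq_zero_or_pos n with h | h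
    · subst h; simp at hy
    · exact ⟨⟨0, h⟩⟩
  have ha : (star (U *ᵥ y) ⬝ᵥ A *ᵥ (U *ᵥ y)).re = ∑ i, lam i * w i := by
    conv_lhs => rw [hA.1.spectral_theorem]
    exact hwq lam
  have hfa : (star (U *ᵥ y) ⬝ᵥ (mfun f A) *ᵥ (U *ᵥ y)).re = ∑ i, f (lam i) * w i := by
    rw [mfun_eq hA.1, cfc_form]
    exact hwq (fun i => f (lam i))
  set a : ℝ := ∑ i, lam i * w i with hadef
  have hlam0 : ∀ i, 0 ≤ lam i := fun i => hA.eigenvalues_nonneg i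
  have hlmin0 : ∀ i, lmin A ≤ lam i := fun i => lmin_le hA.1 i
  have hlmax0 : ∀ i, lam i ≤ lmax A := fun i => le_lmax hA.1 i
  have ha0 : 0 ≤ a :=
    Finset.sum_nonneg fun i _ => mul_nonneg (hlam0 i) (hw0 i)
  have halmax : a ≤ lmax A :=
    wsum_le lam w hw0 hw1 Finset.univ (fun i hi => absurd (Finset.mem_univ i) hi) _
      (fun j _ => hlmax0 j)
  have halmin : lmin A ≤ a :=
    wsum_ge lam w hw0 hw1 Finset.univ (fun i hi => absurd (Finset.mem_univ i) hi) _
      (fun j _ => hlmin0 j)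
  have hmm : lmin A ≤ lmax A := le_trans (hlmin0 (Classical.arbitrary _)) (hlmax0 _)
  obtain ⟨Ca, hCa⟩ := hf a ha0
  set d : ℝ := lmax A - lmin A with hddef
  have hd0 : 0 ≤ d := by simp [hddef]; linarith
  have key : ∀ i, f a + f d + (Ca * lam i - Ca * a) ≤ f (lam i) := by
    intro i
    have h1 := hCa (lam i) (hlam0 i)
    have habs : |lam i - a| ≤ d := by
      rw [abs_le]
      constructor <;> [skip; skip] <;> (have := hlmin0 i; have := hlmax0 i; simp [hddef]; linarith)
    have h2 : f d ≤ f |lam i - a| :=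
      hdec (Set.mem_Ici.mpr (abs_nonneg _)) (Set.mem_Ici.mpr hd0) habs
    nlinarith [h1, h2]
  have hsum1 : ∑ i, (f a + f d + (Ca * lam i - Ca * a)) * w i = f a + f d := by
    have : ∀ i ∈ Finset.univ, (f a + f d + (Ca * lam i - Ca * a)) * w i =
        (f a + f d - Ca * a) * w i + Ca * (lam i * w i) := fun i _ => by ring
    rw [Finset.sum_congr rfl this, Finset.sum_add_distrib, ← Finset.mul_sum, ← Finset.mul_sum,
      hw1, ← hadef]
    ring
  have hsum2 : ∑ i, (f a + f d + (Ca * lam i - Ca * a)) * w i ≤ ∑ i, f (lam i) * w i :=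
    Finset.sum_le_sum fun i _ => mul_le_mul_of_nonneg_right (key i) (hw0 i)
  rw [ha, hfa]
  linarith [hsum1, hsum2]

/-- Concave (Jensen) upper bound for the quadratic form of `mfun f D`. -/
lemma qf_concave (f : ℝ → ℝ) (hconc : ConcaveOn ℝ (Set.Ici (0 : ℝ)) f)
    {D : Matrix (Fin n) (Fin n) ℂ} (hD : D.PosSemidef)
    (U : Matrix (Fin n) (Fin n) ℂ) (hU : U ∈ Matrix.unitaryGroup (Fin n) ℂ)
    (y : Fin n → ℂ) (hy : (∑ i, Complex.normSq (y i)) = 1) :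
    (star (U *ᵥ y) ⬝ᵥ (mfun f D) *ᵥ (U *ᵥ y)).re ≤
      f ((star (U *ᵥ y) ⬝ᵥ D *ᵥ (U *ᵥ y)).re) := by
  obtain ⟨w, hw0, hw1, hwq, -⟩ :=
    qf_repr' U (hD.1.eigenvectorUnitary : Matrix (Fin n) (Fin n) ℂ) hU hD.1.eigenvectorUnitary.2
      y hy
  set lam := hD.1.eigenvalues with hlam
  have ha : (star (U *ᵥ y) ⬝ᵥ D *ᵥ (U *ᵥ y)).re = ∑ i, lam i * w i := by
    conv_lhs => rw [hD.1.spectral_theorem]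
    exact hwq lam
  have hfa : (star (U *ᵥ y) ⬝ᵥ (mfun f D) *ᵥ (U *ᵥ y)).re = ∑ i, f (lam i) * w i := by
    rw [mfun_eq hD.1, cfc_form]
    exact hwq (fun i => f (lam i))
  rw [ha, hfa]
  have hmem : ∀ i ∈ Finset.univ, lam i ∈ Set.Ici (0 : ℝ) :=
    fun i _ => Set.mem_Ici.mpr (hD.eigenvalues_nonneg i)
  have := hconc.le_map_sum (fun i _ => hw0 i) hw1 hmem
  calc ∑ i, f (lam i) * w i = ∑ i, w i • f (lam i) := by
        refine Finset.sum_congr rfl fun i _ => ?_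
        rw [smul_eq_mul, mul_comm]
    _ ≤ f (∑ i, w i • lam i) := this
    _ = f (∑ i, lam i * w i) := by
        congr 1
        refine Finset.sum_congr rfl fun i _ => ?_
        rw [smul_eq_mul, mul_comm]

/-- `|⟨Tx, x⟩| ≤ ⟨|T|x, x⟩` for Hermitian `T`. -/
lemma qf_abs {T : Matrix (Fin n) (Fin n) ℂ} (hT : T.IsHermitian)
    (U : Matrix (Fin n) (Fin n) ℂ) (hU : U ∈ Matrix.unitaryGroup (Fin n) ℂ)
    (y : Fin n → ℂ) (hy : (∑ i, Complex.normSq (y i)) = 1) :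
    |(star (U *ᵥ y) ⬝ᵥ T *ᵥ (U *ᵥ y)).re| ≤
      (star (U *ᵥ y) ⬝ᵥ (matAbs T) *ᵥ (U *ᵥ y)).re := by
  obtain ⟨w, hw0, hw1, hwq, -⟩ :=
    qf_repr' U (hT.eigenvectorUnitary : Matrix (Fin n) (Fin n) ℂ) hU hT.eigenvectorUnitary.2
      y hy
  set lam := hT.eigenvalues with hlam
  have ha : (star (U *ᵥ y) ⬝ᵥ T *ᵥ (U *ᵥ y)).re = ∑ i, lam i * w i := by
    conv_lhs => rw [hT.spectral_theorem]
    exact hwq lam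
  have hfa : (star (U *ᵥ y) ⬝ᵥ (matAbs T) *ᵥ (U *ᵥ y)).re = ∑ i, |lam i| * w i := by
    rw [matAbs_eq hT, cfc_form]
    exact hwq (fun i => |lam i|)
  rw [ha, hfa]
  calc |∑ i, lam i * w i| ≤ ∑ i, |lam i * w i| := Finset.abs_sum_le_sum_abs _ _
    _ = ∑ i, |lam i| * w i := by
        refine Finset.sum_congr rfl fun i _ => ?_
        rw [abs_mul, abs_of_nonneg (hw0 i)]

lemma posSemidef_real_smul {M : Matrix (Fin n) (Fin n) ℂ} (hM : M.PosSemidef) {r : ℝ}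
    (hr : 0 ≤ r) : ((r : ℂ) • M).PosSemidef := by
  exact hM.smul (by exact_mod_cast hr)

lemma qf_add (M N : Matrix (Fin n) (Fin n) ℂ) (x : Fin n → ℂ) :
    star x ⬝ᵥ (M + N) *ᵥ x = star x ⬝ᵥ M *ᵥ x + star x ⬝ᵥ N *ᵥ x := by
  rw [add_mulVec, dotProduct_add]

lemma qf_sub (M N : Matrix (Fin n) (Fin n) ℂ) (x : Fin n → ℂ) :
    star x ⬝ᵥ (M - N) *ᵥ x = star x ⬝ᵥ M *ᵥ x - star x ⬝ᵥ N *ᵥ x := by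
  rw [sub_mulVec, dotProduct_sub]

lemma qf_smul (c : ℂ) (M : Matrix (Fin n) (Fin n) ℂ) (x : Fin n → ℂ) :
    star x ⬝ᵥ (c • M) *ᵥ x = c * (star x ⬝ᵥ M *ᵥ x) := by
  rw [smul_mulVec, dotProduct_smul, smul_eq_mul]

lemma qf_nonneg_re {M : Matrix (Fin n) (Fin n) ℂ} (hM : M.PosSemidef) (x : Fin n → ℂ) :
    0 ≤ (star x ⬝ᵥ M *ᵥ x).re := by
  have := hM.dotProduct_mulVec_nonneg x
  rw [Complex.le_def] at this
  simpa using this.1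


end Aux

/-- eigenvalue inequality for concave decreasing superquadratic functions. -/
theorem eigenvalue_superquadratic_concave {n : ℕ} (f : ℝ → ℝ) (hf : Superquadratic f)
    (hconc : ConcaveOn ℝ (Set.Ici (0 : ℝ)) f) (hdec : AntitoneOn f (Set.Ici (0 : ℝ)))
    (α : ℝ) (hα : α ∈ Set.Icc (0 : ℝ) 1)
    (A B : Matrix (Fin n) (Fin n) ℂ) (hA : A.PosSemidef) (hB : B.PosSemidef)
    (k : Fin n) :
    lkth (mfun f (((1 - α : ℝ) : ℂ) • A + ((α : ℝ) : ℂ) • B)) k ≤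
      lkth
        (((1 - α : ℝ) : ℂ) •
            (mfun f A - ((f (lmax A - lmin A) : ℝ) : ℂ) • 1 -
              mfun f (((α : ℝ) : ℂ) • matAbs (A - B))) +
          ((α : ℝ) : ℂ) •
            (mfun f B - ((f (lmax B - lmin B) : ℝ) : ℂ) • 1 -
              mfun f (((1 - α : ℝ) : ℂ) • matAbs (A - B)))) k := by
  obtain ⟨hα0, hα1⟩ := hα
  have h1α : (0:ℝ) ≤ 1 - α := by linarith
  set T : Matrix (Fin n) (Fin n) ℂ := A - B with hTdef
  have hT : T.IsHermitian := hA.1.sub hB.1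
  have habsPSD : (matAbs T).PosSemidef := by rw [matAbs_eq hT]; exact cfc_posSemidef hT _ (fun i => abs_nonneg _)
  set D1 : Matrix (Fin n) (Fin n) ℂ := ((α : ℝ) : ℂ) • matAbs T with hD1def
  set D2 : Matrix (Fin n) (Fin n) ℂ := ((1 - α : ℝ) : ℂ) • matAbs T with hD2def
  have hD1 : D1.PosSemidef := posSemidef_real_smul habsPSD hα0
  have hD2 : D2.PosSemidef := posSemidef_real_smul habsPSD h1α
  set C : Matrix (Fin n) (Fin n) ℂ := ((1 - α : ℝ) : ℂ) • A + ((α : ℝ) : ℂ) • B with hCdef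
  have hC : C.PosSemidef := (posSemidef_real_smul hA h1α).add (posSemidef_real_smul hB hα0)
  set dA : ℝ := lmax A - lmin A with hdAdef
  set dB : ℝ := lmax B - lmin B with hdBdef
  set X1 : Matrix (Fin n) (Fin n) ℂ := mfun f A - ((f dA : ℝ) : ℂ) • 1 - mfun f D1 with hX1def
  set X2 : Matrix (Fin n) (Fin n) ℂ := mfun f B - ((f dB : ℝ) : ℂ) • 1 - mfun f D2 with hX2def
  have hX1h : X1.IsHermitian :=
    ((mfun_isHermitian f A).sub (isHermitian_real_smul isHermitian_one _)).sub
      (mfun_isHermitian f D1)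
  have hX2h : X2.IsHermitian :=
    ((mfun_isHermitian f B).sub (isHermitian_real_smul isHermitian_one _)).sub
      (mfun_isHermitian f D2)
  set S : Matrix (Fin n) (Fin n) ℂ := ((1 - α : ℝ) : ℂ) • X1 + ((α : ℝ) : ℂ) • X2 with hSdef
  have hSh : S.IsHermitian := (isHermitian_real_smul hX1h _).add (isHermitian_real_smul hX2h _)
  set σC := Tuple.sort hC.1.eigenvalues with hσC
  set μ : ℝ := hC.1.eigenvalues (σC k) with hμdef
  have hμ0 : 0 ≤ μ := hC.eigenvalues_nonneg _
  set UC : Matrix (Fin n) (Fin n) ℂ := (hC.1.eigenvectorUnitary : Matrix (Fin n) (Fin n) ℂ)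
    with hUCdef
  have hUCmem : UC ∈ Matrix.unitaryGroup (Fin n) ℂ := hC.1.eigenvectorUnitary.2
  have hUCunit : star UC * UC = 1 := Matrix.mem_unitaryGroup_iff'.mp hUCmem
  have step1 : lkth (mfun f C) k ≤ f μ := by
    refine lkth_le (mfun f C) (mfun_isHermitian f C) k UC hUCmem
      ((Finset.Ici k).image ⇑σC) ?_ (f μ) ?_
    · rw [Finset.card_image_of_injective _ σC.injective, Fin.card_Ici]
      have := k.isLt
      omega
    · intro y hy hysupp
      obtain ⟨w, hw0, hw1, hwq, hwz⟩ := qf_repr' UC UC hUCmem hUCmem y hy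
      have hrw : (star (UC *ᵥ y) ⬝ᵥ (mfun f C) *ᵥ (UC *ᵥ y)).re =
          ∑ i, f (hC.1.eigenvalues i) * w i := by
        rw [mfun_eq hC.1, cfc_form]
        exact hwq _
      rw [hrw]
      refine wsum_le _ w hw0 hw1 ((Finset.Ici k).image ⇑σC) ?_ _ ?_
      · intro i hi
        rw [hwz i, hUCunit, one_mulVec, hysupp i hi, Complex.normSq_zero]
      · intro j hj
        obtain ⟨i, hi, rfl⟩ := Finset.mem_image.mp hj
        have hle : μ ≤ hC.1.eigenvalues (σC i) :=
          Tuple.monotone_sort hC.1.eigenvalues (Finset.mem_Ici.mp hi)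
        exact hdec (Set.mem_Ici.mpr hμ0) (Set.mem_Ici.mpr (hC.eigenvalues_nonneg _)) hle
  have step2 : f μ ≤ lkth S k := by
    refine lkth_ge S hSh k UC hUCmem ((Finset.Iic k).image ⇑σC) ?_ (f μ) ?_
    · rw [Finset.card_image_of_injective _ σC.injective, Fin.card_Iic]
    · intro y hy hysupp
      have hx1 : star (UC *ᵥ y) ⬝ᵥ (UC *ᵥ y) = 1 := by
        rw [norm_repr UC hUCmem y, hy]
        norm_num
      have gA := qf_superquad f hf hdec hA UC hUCmem y hy
      have gB := qf_superquad f hf hdec hB UC hUCmem y hy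
      have g1 := qf_concave f hconc hD1 UC hUCmem y hy
      have g2 := qf_concave f hconc hD2 UC hUCmem y hy
      have gabs := qf_abs hT UC hUCmem y hy
      have ha0 : 0 ≤ (star (UC *ᵥ y) ⬝ᵥ A *ᵥ (UC *ᵥ y)).re := qf_nonneg_re hA _
      have hb0 : 0 ≤ (star (UC *ᵥ y) ⬝ᵥ B *ᵥ (UC *ᵥ y)).re := qf_nonneg_re hB _
      have hdd0 : 0 ≤ (star (UC *ᵥ y) ⬝ᵥ (matAbs T) *ᵥ (UC *ᵥ y)).re := qf_nonneg_re habsPSD _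
      have hmle : (star (UC *ᵥ y) ⬝ᵥ C *ᵥ (UC *ᵥ y)).re ≤ μ := by
        obtain ⟨w, hw0, hw1, hwq, hwz⟩ := qf_repr' UC UC hUCmem hUCmem y hy
        have hrw : (star (UC *ᵥ y) ⬝ᵥ C *ᵥ (UC *ᵥ y)).re = ∑ i, hC.1.eigenvalues i * w i := by
          conv_lhs => rw [hC.1.spectral_theorem]
          exact hwq _
        rw [hrw]
        refine wsum_le _ w hw0 hw1 ((Finset.Iic k).image ⇑σC) ?_ _ ?_
        · intro i hi
          rw [hwz i, hUCunit, one_mulVec, hysupp i hi, Complex.normSq_zero]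
        · intro j hj
          obtain ⟨i, hi, rfl⟩ := Finset.mem_image.mp hj
          exact Tuple.monotone_sort hC.1.eigenvalues (Finset.mem_Iic.mp hi)
      have hq1 : (star (UC *ᵥ y) ⬝ᵥ D1 *ᵥ (UC *ᵥ y)).re =
          α * (star (UC *ᵥ y) ⬝ᵥ (matAbs T) *ᵥ (UC *ᵥ y)).re := by
        rw [hD1def, qf_smul, Complex.re_ofReal_mul]
      have hq2 : (star (UC *ᵥ y) ⬝ᵥ D2 *ᵥ (UC *ᵥ y)).re =
          (1 - α) * (star (UC *ᵥ y) ⬝ᵥ (matAbs T) *ᵥ (UC *ᵥ y)).re := by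
        rw [hD2def, qf_smul, Complex.re_ofReal_mul]
      have hab : (star (UC *ᵥ y) ⬝ᵥ T *ᵥ (UC *ᵥ y)).re =
          (star (UC *ᵥ y) ⬝ᵥ A *ᵥ (UC *ᵥ y)).re - (star (UC *ᵥ y) ⬝ᵥ B *ᵥ (UC *ᵥ y)).re := by
        rw [hTdef, qf_sub, Complex.sub_re]
      have hm : (star (UC *ᵥ y) ⬝ᵥ C *ᵥ (UC *ᵥ y)).re =
          (1 - α) * (star (UC *ᵥ y) ⬝ᵥ A *ᵥ (UC *ᵥ y)).re
            + α * (star (UC *ᵥ y) ⬝ᵥ B *ᵥ (UC *ᵥ y)).re := by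
        rw [hCdef, qf_add, Complex.add_re, qf_smul, qf_smul, Complex.re_ofReal_mul,
          Complex.re_ofReal_mul]
      have hSq : (star (UC *ᵥ y) ⬝ᵥ S *ᵥ (UC *ᵥ y)).re =
          (1 - α) * ((star (UC *ᵥ y) ⬝ᵥ (mfun f A) *ᵥ (UC *ᵥ y)).re - f dA
              - (star (UC *ᵥ y) ⬝ᵥ (mfun f D1) *ᵥ (UC *ᵥ y)).re)
            + α * ((star (UC *ᵥ y) ⬝ᵥ (mfun f B) *ᵥ (UC *ᵥ y)).re - f dB
              - (star (UC *ᵥ y) ⬝ᵥ (mfun f D2) *ᵥ (UC *ᵥ y)).re) := by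
        rw [hSdef, qf_add, Complex.add_re, qf_smul, qf_smul, Complex.re_ofReal_mul,
          Complex.re_ofReal_mul, hX1def, hX2def, qf_sub, qf_sub, qf_sub, qf_sub,
          qf_smul, qf_smul, one_mulVec, hx1, mul_one, mul_one]
        simp [Complex.sub_re, Complex.ofReal_re]
      set a : ℝ := (star (UC *ᵥ y) ⬝ᵥ A *ᵥ (UC *ᵥ y)).re with hadef
      set b : ℝ := (star (UC *ᵥ y) ⬝ᵥ B *ᵥ (UC *ᵥ y)).re with hbdef
      set dd : ℝ := (star (UC *ᵥ y) ⬝ᵥ (matAbs T) *ᵥ (UC *ᵥ y)).re with hdddef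
      rw [hm] at hmle
      rw [hq1] at g1
      rw [hq2] at g2
      rw [hab] at gabs
      have hm0 : 0 ≤ (1 - α) * a + α * b :=
        add_nonneg (mul_nonneg h1α ha0) (mul_nonneg hα0 hb0)
      obtain ⟨Cm, hCm⟩ := hf ((1 - α) * a + α * b) hm0
      have e1 := hCm a ha0
      have e2 := hCm b hb0
      have ham : |a - ((1 - α) * a + α * b)| = α * |a - b| := by
        rw [show a - ((1 - α) * a + α * b) = α * (a - b) by ring, abs_mul, abs_of_nonneg hα0]
      have hbm : |b - ((1 - α) * a + α * b)| = (1 - α) * |a - b| := by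
        rw [show b - ((1 - α) * a + α * b) = (1 - α) * (b - a) by ring, abs_mul,
          abs_of_nonneg h1α, abs_sub_comm]
      rw [ham] at e1
      rw [hbm] at e2
      have hfa1 : f (α * dd) ≤ f (α * |a - b|) :=
        hdec (Set.mem_Ici.mpr (mul_nonneg hα0 (abs_nonneg _)))
          (Set.mem_Ici.mpr (mul_nonneg hα0 hdd0))
          (mul_le_mul_of_nonneg_left gabs hα0)
      have hfa2 : f ((1 - α) * dd) ≤ f ((1 - α) * |a - b|) :=
        hdec (Set.mem_Ici.mpr (mul_nonneg h1α (abs_nonneg _)))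
          (Set.mem_Ici.mpr (mul_nonneg h1α hdd0))
          (mul_le_mul_of_nonneg_left gabs h1α)
      have tA : f ((1 - α) * a + α * b) + Cm * (a - ((1 - α) * a + α * b)) ≤
          (star (UC *ᵥ y) ⬝ᵥ (mfun f A) *ᵥ (UC *ᵥ y)).re - f dA
            - (star (UC *ᵥ y) ⬝ᵥ (mfun f D1) *ᵥ (UC *ᵥ y)).re := by
        linarith [gA, g1, hfa1, e1]
      have tB : f ((1 - α) * a + α * b) + Cm * (b - ((1 - α) * a + α * b)) ≤
          (star (UC *ᵥ y) ⬝ᵥ (mfun f B) *ᵥ (UC *ᵥ y)).re - f dB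
            - (star (UC *ᵥ y) ⬝ᵥ (mfun f D2) *ᵥ (UC *ᵥ y)).re := by
        linarith [gB, g2, hfa2, e2]
      have hfm : f μ ≤ f ((1 - α) * a + α * b) :=
        hdec (Set.mem_Ici.mpr hm0) (Set.mem_Ici.mpr hμ0) hmle
      rw [hSq]
      calc f μ ≤ f ((1 - α) * a + α * b) := hfm
        _ = (1 - α) * (f ((1 - α) * a + α * b) + Cm * (a - ((1 - α) * a + α * b)))
              + α * (f ((1 - α) * a + α * b) + Cm * (b - ((1 - α) * a + α * b))) := by ring
        _ ≤ (1 - α) * ((star (UC *ᵥ y) ⬝ᵥ (mfun f A) *ᵥ (UC *ᵥ y)).re - f dA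
              - (star (UC *ᵥ y) ⬝ᵥ (mfun f D1) *ᵥ (UC *ᵥ y)).re)
            + α * ((star (UC *ᵥ y) ⬝ᵥ (mfun f B) *ᵥ (UC *ᵥ y)).re - f dB
              - (star (UC *ᵥ y) ⬝ᵥ (mfun f D2) *ᵥ (UC *ᵥ y)).re) :=
          add_le_add (mul_le_mul_of_nonneg_left tA h1α) (mul_le_mul_of_nonneg_left tB hα0)
  exact le_trans step1 step2
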